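/- Let X be a closed Effros-measurable random set in a separable Banach space E with L^p(X) ≠ ∅, where p ∈ {0}∪[1,∞). Then L^p of the a.s. closed convex hull of X equals the closed convex hull of L^p(X): L^p(c̄onv X) = c̄onv L^p(X). Moreover X is a.s. convex if and only if L^p(X) is convex. -/

import Mathlib

open MeasureTheory
open scoped ENNReal

/-- `A ⊆ L^p(Ω;E)` is decomposable: together with `f` and `g` it contains (the class of)
`1_B f + 1_{B^c} g` for every measurable `B`. -/
def IsDecomposable {Ω : Type*} {mΩ : MeasurableSpace Ω} {μ : Measure Ω} {E : Type*}
    [NormedAddCommGroup E] {p : ℝ≥0∞} (A : Set (Lp E p μ)) : Prop :=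
  ∀ f ∈ A, ∀ g ∈ A, ∀ B : Set Ω, MeasurableSet B →
    ∀ h : Lp E p μ, (h : Ω → E) =ᵐ[μ] (B.indicator f + Bᶜ.indicator g) → h ∈ A

/-- The decomposable hull of `A`: the smallest decomposable subset of `L^p(Ω;E)`
containing `A`. -/
def decHull {Ω : Type*} {mΩ : MeasurableSpace Ω} {μ : Measure Ω} {E : Type*}
    [NormedAddCommGroup E] {p : ℝ≥0∞} (A : Set (Lp E p μ)) : Set (Lp E p μ) :=
  ⋂₀ {C : Set (Lp E p μ) | A ⊆ C ∧ IsDecomposable C}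

/-- The set of `L^p` selections of a multifunction `X : Ω → 𝒫(E)`. -/
def SelLp {Ω : Type*} {mΩ : MeasurableSpace Ω} (μ : Measure Ω) {E : Type*}
    [NormedAddCommGroup E] (p : ℝ≥0∞) (X : Ω → Set E) : Set (Lp E p μ) :=
  {f : Lp E p μ | ∀ᵐ ω ∂μ, f ω ∈ X ω}

/-- Effros measurability of a multifunction. -/
def EffrosMeasurable {Ω : Type*} (mΩ : MeasurableSpace Ω) {E : Type*} [TopologicalSpace E]
    (X : Ω → Set E) : Prop :=
  ∀ U : Set E, IsOpen U → MeasurableSet {ω | (X ω ∩ U).Nonempty}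

/-- `Y ∈ L^p(Ω;E)` is the barycenter of the transition probability kernel `K`. -/
def IsKernelBarycenter {Ω : Type*} {mΩ : MeasurableSpace Ω} (μ : Measure Ω) {E : Type*}
    [NormedAddCommGroup E] [NormedSpace ℝ E] [MeasurableSpace E] {p : ℝ≥0∞}
    (K : ProbabilityTheory.Kernel Ω E) (Y : Lp E p μ) : Prop :=
  ∀ L : E →L[ℝ] ℝ, (fun ω => L (Y ω)) =ᵐ[μ] (fun ω => ∫ x, L x ∂(K ω))

/-- A kernel is Dirac-valued (a.s.) if almost every `K ω` is a Dirac measure. -/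
def DiracValued {Ω : Type*} {mΩ : MeasurableSpace Ω} (μ : Measure Ω) {E : Type*}
    [MeasurableSpace E] (K : ProbabilityTheory.Kernel Ω E) : Prop :=
  ∀ᵐ ω ∂μ, ∃ x : E, K ω = MeasureTheory.Measure.dirac x

/-- A kernel is supported (a.s.) on the multifunction `F`. -/
def KernelSupportedOn {Ω : Type*} {mΩ : MeasurableSpace Ω} (μ : Measure Ω) {E : Type*}
    [MeasurableSpace E] (K : ProbabilityTheory.Kernel Ω E) (F : Ω → Set E) : Prop :=
  ∀ᵐ ω ∂μ, K ω (F ω) = 1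

/-- `A ⊆ L^p(Ω;E)` is `p`-Choquet decomposable: it contains the barycenter of every
Dirac-valued transition probability kernel supported a.s. on the closed random set `F_A`
determined by `cl_p (dec A) = L^p(F_A)`, whose barycenter lies in `L^p`. -/
def PChoquetDecomposable {Ω : Type*} {mΩ : MeasurableSpace Ω} (μ : Measure Ω) {E : Type*}
    [NormedAddCommGroup E] [NormedSpace ℝ E] [MeasurableSpace E] [BorelSpace E]
    (p : ℝ≥0∞) [Fact (1 ≤ p)] (A : Set (Lp E p μ)) : Prop :=
  ∀ F : Ω → Set E, (∀ᵐ ω ∂μ, IsClosed (F ω)) →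
    SelLp μ p F = closure (decHull A) →
    ∀ K : ProbabilityTheory.Kernel Ω E, ProbabilityTheory.IsMarkovKernel K →
      DiracValued μ K → KernelSupportedOn μ K F →
      ∀ Y : Lp E p μ, IsKernelBarycenter μ K Y → Y ∈ A

/-!
A Castaing representation of `X` (Kuratowski–Ryll-Nardzewski), truncated so as to lie in `L^p`,
gives countably many `L^p` selections that are pointwise dense in `X`; their rational convex
combinations are countably many elements of `conv L^p(X)` that are pointwise dense in `c̄onv X`.
Since `conv L^p(X)` is decomposable, gluing finitely many of them along the measurable sets where
they are close to a selection `f` of `c̄onv X`, and falling back on a fixed one on the small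
remaining set (absolute continuity of `‖f - D 0‖^p`), approximates `f` in `L^p`. The same dense
family shows that `c̄onv X ⊆ X` a.s. as soon as `L^p(X)` is convex.
-/

open Set Filter Topology Metric
open scoped NNReal

section Selection

variable {Ω : Type*} {mΩ : MeasurableSpace Ω} {E : Type*} [NormedAddCommGroup E]
  {X : Ω → Set E}

theorem EffrosMeasurable.measurable_infDist (hm : EffrosMeasurable mΩ X)
    (hne : ∀ ω, (X ω).Nonempty) (x : E) : Measurable fun ω => infDist x (X ω) := by
  refine measurable_of_Iio fun r => ?_
  rcases le_or_gt r 0 with hr | hr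
  · convert MeasurableSet.empty
    ext ω
    simpa using hr.trans infDist_nonneg
  · convert hm _ (isOpen_ball (x := x) (ε := r)) using 1
    ext ω
    simp only [mem_preimage, mem_Iio, infDist_lt_iff (hne ω), mem_ofPred_eq, Set.Nonempty,
      mem_inter_iff, mem_ball']

variable [MeasurableSpace E] [BorelSpace E] [SecondCountableTopology E]

/-- The inductive step of the Kuratowski–Ryll-Nardzewski construction: `h ω` is the first term
of a dense sequence that is `r`-close to `X ω` and `c ω`-close to `g ω`. -/
theorem EffrosMeasurable.exists_measurable_near (hm : EffrosMeasurable mΩ X) {g : Ω → E}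
    (hg : Measurable g) {c : Ω → ℝ} (hc : Measurable c)
    (hgX : ∀ ω, ∃ y ∈ X ω, dist y (g ω) < c ω) {r : ℝ} (hr : 0 < r) :
    ∃ h : Ω → E, Measurable h ∧ ∀ ω, (∃ y ∈ X ω, dist y (h ω) < r) ∧ dist (h ω) (g ω) < c ω := by
  classical
  obtain ⟨e, he⟩ := TopologicalSpace.exists_dense_seq E
  let P : Ω → ℕ → Prop := fun ω m => (X ω ∩ ball (e m) r).Nonempty ∧ dist (e m) (g ω) < c ω
  have hP : ∀ ω, ∃ m, P ω m := by
    intro ω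
    obtain ⟨y, hyX, hy⟩ := hgX ω
    obtain ⟨m, hm⟩ := denseRange_iff.1 he y (min r (c ω - dist y (g ω))) (by simp [hr, hy])
    refine ⟨m, ⟨y, hyX, mem_ball.2 (hm.trans_le (min_le_left _ _))⟩, ?_⟩
    linarith [dist_triangle (e m) y (g ω), dist_comm y (e m), min_le_right r (c ω - dist y (g ω))]
  have hPm : ∀ m, MeasurableSet {ω | P ω m} := fun m =>
    (hm _ isOpen_ball).inter (measurableSet_lt (measurable_const.dist hg) hc)
  refine ⟨fun ω => e (Nat.find (hP ω)), measurable_from_nat.comp (measurable_find hP hPm),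
    fun ω => ?_⟩
  obtain ⟨⟨y, hyX, hy⟩, hdist⟩ := Nat.find_spec (hP ω)
  exact ⟨⟨y, hyX, mem_ball.1 hy⟩, hdist⟩

theorem EffrosMeasurable.exists_measurable_selection_near [CompleteSpace E]
    (hm : EffrosMeasurable mΩ X) (hcl : ∀ ω, IsClosed (X ω)) {g : Ω → E} (hg : Measurable g)
    {δ : ℝ} (hδ : 0 < δ) (hgX : ∀ ω, ∃ y ∈ X ω, dist y (g ω) < δ) :
    ∃ f : Ω → E, Measurable f ∧ ∀ ω, f ω ∈ X ω ∧ dist (g ω) (f ω) ≤ 2 * δ := by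
  have step : ∀ (j : ℕ) (h : Ω → E), Measurable h → (∀ ω, ∃ y ∈ X ω, dist y (h ω) < δ / 2 ^ j) →
      ∃ h' : Ω → E, Measurable h' ∧ ∀ ω, (∃ y ∈ X ω, dist y (h' ω) < δ / 2 ^ (j + 1)) ∧
        dist (h' ω) (h ω) < δ / 2 ^ j := fun j h hh hhX =>
    hm.exists_measurable_near hh measurable_const hhX (by positivity)
  choose! next hnext_meas hnext using step
  let u : ℕ → Ω → E := fun j => Nat.rec g (fun j h => next j h) j
  have hu : ∀ j, Measurable (u j) ∧ ∀ ω, ∃ y ∈ X ω, dist y (u j ω) < δ / 2 ^ j := by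
    intro j
    induction j with
    | zero => simpa [u] using ⟨hg, hgX⟩
    | succ j ih => exact ⟨hnext_meas j _ ih.1 ih.2, fun ω => (hnext j _ ih.1 ih.2 ω).1⟩
  have hu_dist : ∀ ω j, dist (u j ω) (u (j + 1) ω) ≤ 2 * δ / 2 / 2 ^ j := fun ω j => by
    rw [dist_comm, mul_div_cancel_left₀ _ two_ne_zero]
    exact (hnext j _ (hu j).1 (hu j).2 ω).2.le
  choose f hf using fun ω =>
    cauchySeq_tendsto_of_complete (cauchySeq_of_le_geometric_two (hu_dist ω))
  refine ⟨f, measurable_of_tendsto_metrizable (fun j => (hu j).1) (tendsto_pi_nhds.2 hf),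
    fun ω => ⟨?_, dist_le_of_le_geometric_two_of_tendsto₀ (hu_dist ω) (hf ω)⟩⟩
  choose y hyX hy using fun j => (hu j).2 ω
  refine (hcl ω).mem_of_tendsto (f := y) (b := atTop) (tendsto_iff_dist_tendsto_zero.2 ?_)
    (Eventually.of_forall hyX)
  have hδj : Tendsto (fun j : ℕ => δ / 2 ^ j) atTop (𝓝 0) :=
    tendsto_const_nhds.div_atTop (tendsto_pow_atTop_atTop_of_one_lt one_lt_two)
  refine squeeze_zero (fun _ => dist_nonneg)
    (fun j => (dist_triangle _ (u j ω) _).trans (add_le_add_left (hy j).le _)) ?_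
  simpa using hδj.add (tendsto_iff_dist_tendsto_zero.1 (hf ω))

theorem EffrosMeasurable.exists_measurable_selection_dist_lt [CompleteSpace E]
    (hm : EffrosMeasurable mΩ X) (hcl : ∀ ω, IsClosed (X ω)) (hne : ∀ ω, (X ω).Nonempty)
    (x : E) {η : ℝ} (hη : 0 < η) :
    ∃ f : Ω → E, Measurable f ∧ ∀ ω, f ω ∈ X ω ∧ dist (f ω) x < infDist x (X ω) + η := by
  have hxX : ∀ ω, ∃ y ∈ X ω, dist y x < infDist x (X ω) + η / 2 := fun ω => by
    obtain ⟨y, hyX, hy⟩ := (infDist_lt_iff (hne ω)).1 (lt_add_of_pos_right _ (half_pos hη))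
    exact ⟨y, hyX, dist_comm x y ▸ hy⟩
  obtain ⟨g, hg, hgX⟩ := hm.exists_measurable_near measurable_const
    ((hm.measurable_infDist hne x).add_const _) hxX (by positivity : 0 < η / 4)
  obtain ⟨f, hf, hfX⟩ := hm.exists_measurable_selection_near hcl hg (by positivity)
    fun ω => (hgX ω).1
  refine ⟨f, hf, fun ω => ⟨(hfX ω).1, ?_⟩⟩
  linarith [dist_triangle (f ω) (g ω) x, dist_comm (f ω) (g ω), (hfX ω).2, (hgX ω).2]

theorem EffrosMeasurable.exists_castaing [CompleteSpace E] (hm : EffrosMeasurable mΩ X)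
    (hcl : ∀ ω, IsClosed (X ω)) (hne : ∀ ω, (X ω).Nonempty) :
    ∃ ξ : ℕ → Ω → E, (∀ n, Measurable (ξ n)) ∧ (∀ n ω, ξ n ω ∈ X ω) ∧
      ∀ ω, X ω ⊆ closure (range fun n => ξ n ω) := by
  obtain ⟨e, he⟩ := TopologicalSpace.exists_dense_seq E
  choose F hF hFX hFe using fun q : ℕ × ℕ =>
    hm.exists_measurable_selection_dist_lt hcl hne (e q.1) (Nat.one_div_pos_of_nat (n := q.2))
  refine ⟨fun n => F n.unpair, fun n => hF _, fun n ω => hFX _ ω, fun ω x hx => ?_⟩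
  refine Metric.mem_closure_iff.2 fun ε hε => ?_
  obtain ⟨m, hm⟩ := denseRange_iff.1 he x (ε / 3) (by positivity)
  obtain ⟨k, hk⟩ := exists_nat_one_div_lt (by positivity : 0 < ε / 3)
  refine ⟨_, ⟨Nat.pair m k, rfl⟩, ?_⟩
  have hd := hFe (m, k) ω
  simp only [Nat.unpair_pair] at hd ⊢
  linarith [infDist_le_dist_of_mem (x := e m) hx, dist_triangle x (e m) (F (m, k) ω),
    dist_comm x (e m), dist_comm (e m) (F (m, k) ω)]

end Selection

section SelectionsInLp

variable {Ω : Type*} {mΩ : MeasurableSpace Ω} {μ : Measure Ω} {E : Type*}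

theorem EffrosMeasurable.exists_isClosed_ae_eq [TopologicalSpace E] [T1Space E] [MeasurableSpace E]
    [OpensMeasurableSpace E] {X : Ω → Set E} (hm : EffrosMeasurable mΩ X)
    (hcl : ∀ᵐ ω ∂μ, IsClosed (X ω)) {g : Ω → E} (hg : Measurable g)
    (hgX : ∀ᵐ ω ∂μ, g ω ∈ X ω) :
    ∃ Y : Ω → Set E, EffrosMeasurable mΩ Y ∧ (∀ ω, IsClosed (Y ω)) ∧ (∀ ω, g ω ∈ Y ω) ∧
      ∀ᵐ ω ∂μ, Y ω = X ω := by
  classical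
  set N := toMeasurable μ {ω | ¬(IsClosed (X ω) ∧ g ω ∈ X ω)}
  have hNm : MeasurableSet N := measurableSet_toMeasurable _ _
  have hN : ∀ ω ∉ N, IsClosed (X ω) ∧ g ω ∈ X ω := fun ω hω =>
    not_not.1 fun h => hω (subset_toMeasurable _ _ h)
  refine ⟨fun ω => if ω ∈ N then {g ω} else X ω, fun U hU => ?_, fun ω => ?_, fun ω => ?_, ?_⟩
  · convert (hNm.inter (hg hU.measurableSet)).union (hNm.compl.inter (hm U hU)) using 1
    ext ω
    by_cases h : ω ∈ N <;> simp [h]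
  · dsimp only
    split_ifs with h
    exacts [isClosed_singleton, (hN ω h).1]
  · dsimp only
    split_ifs with h
    exacts [rfl, (hN ω h).2]
  · have : μ N = 0 := by rw [measure_toMeasurable]; exact ae_iff.1 (hcl.and hgX)
    filter_upwards [measure_eq_zero_iff_ae_notMem.1 this] with ω h using if_neg h

variable [NormedAddCommGroup E] {p : ℝ≥0∞}

/-- `Z (pair n k)` is `ξ n` truncated to `f` outside `{‖ξ n‖ ≤ k}`. -/
theorem exists_Lp_seq_range_subset [IsFiniteMeasure μ] {ξ : ℕ → Ω → E}
    (hξ : ∀ n, StronglyMeasurable (ξ n)) (f : Lp E p μ) :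
    ∃ Z : ℕ → Lp E p μ, ∀ᵐ ω ∂μ, (∀ n, Z n ω ∈ insert (f ω) (range fun m => ξ m ω)) ∧
      range (fun m => ξ m ω) ⊆ range fun n => Z n ω := by
  classical
  let ζ : ℕ × ℕ → Ω → E := fun q ω => if ‖ξ q.1 ω‖ ≤ q.2 then ξ q.1 ω else f ω
  have hζ : ∀ q, MemLp (ζ q) p μ := fun q => by
    refine MemLp.of_le ((Lp.memLp f).norm.add (memLp_const (q.2 : ℝ)))
      (((hξ q.1).ite (measurableSet_le (hξ q.1).norm.measurable measurable_const)
        (Lp.stronglyMeasurable f)).aestronglyMeasurable) (Eventually.of_forall fun ω => ?_)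
    simp only [ζ, Pi.add_apply, Real.norm_eq_abs]
    split_ifs <;> rw [abs_of_nonneg (by positivity)] <;> linarith [norm_nonneg (f ω)]
  refine ⟨fun n => (hζ n.unpair).toLp, ?_⟩
  filter_upwards [ae_all_iff.2 fun n : ℕ => (hζ n.unpair).coeFn_toLp] with ω hω
  refine ⟨fun n => ?_, ?_⟩
  · rw [hω n]
    simp only [ζ]
    split_ifs
    exacts [mem_insert_of_mem _ ⟨_, rfl⟩, mem_insert _ _]
  · rintro _ ⟨m, rfl⟩
    refine ⟨Nat.pair m ⌈‖ξ m ω‖⌉₊, (hω _).trans ?_⟩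
    simp only [ζ, Nat.unpair_pair, if_pos (Nat.le_ceil _)]

theorem exists_seq_selLp_dense [IsFiniteMeasure μ] [CompleteSpace E] [SecondCountableTopology E]
    {X : Ω → Set E} (hXcl : ∀ᵐ ω ∂μ, IsClosed (X ω)) (hXm : EffrosMeasurable mΩ X)
    (hne : (SelLp μ p X).Nonempty) :
    ∃ Z : ℕ → Lp E p μ, (∀ n, Z n ∈ SelLp μ p X) ∧
      ∀ᵐ ω ∂μ, X ω ⊆ closure (range fun n => Z n ω) := by
  borelize E
  obtain ⟨f, hf⟩ := hne
  obtain ⟨Y, hYm, hYcl, hfY, hYX⟩ :=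
    hXm.exists_isClosed_ae_eq hXcl (Lp.stronglyMeasurable f).measurable hf
  obtain ⟨ξ, hξ, hξY, hYξ⟩ := hYm.exists_castaing hYcl fun ω => ⟨_, hfY ω⟩
  obtain ⟨Z, hZ⟩ := exists_Lp_seq_range_subset (fun n => (hξ n).stronglyMeasurable) f
  refine ⟨Z, fun n => ?_, ?_⟩
  · show ∀ᵐ ω ∂μ, Z n ω ∈ X ω
    filter_upwards [hZ, hYX, hf] with ω hZω hYω hfω
    rcases hZω.1 n with h | ⟨m, h⟩
    · exact h ▸ hfω
    · exact h ▸ hYω ▸ hξY m ω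
  · filter_upwards [hZ, hYX] with ω hZω hYω
    exact hYω ▸ (hYξ ω).trans (closure_mono hZω.2)

end SelectionsInLp

section RationalConvexCombinations

variable {V : Type*} [AddCommGroup V] [Module ℝ V]

theorem Convex.closure_of_forall_rat [TopologicalSpace V] [IsTopologicalAddGroup V]
    [ContinuousSMul ℝ V] {s : Set V}
    (hs : ∀ x ∈ s, ∀ y ∈ s, ∀ c : ℚ, 0 ≤ c → c ≤ 1 → (c : ℝ) • x + (1 - c : ℝ) • y ∈ s) :
    Convex ℝ (closure s) := by
  intro x hx y hy a b ha hb hab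
  obtain rfl : b = 1 - a := by linarith
  let T : Set ℝ := {t | ∃ c : ℚ, 0 ≤ c ∧ c ≤ 1 ∧ (c : ℝ) = t}
  have haT : a ∈ closure T := by
    have hIoo : Ioo (0 : ℝ) 1 ∩ range Rat.cast ⊆ T := by
      rintro _ ⟨⟨h0, h1⟩, c, rfl⟩
      exact ⟨c, by exact_mod_cast h0.le, by exact_mod_cast h1.le, rfl⟩
    have := (Rat.denseRange_cast (𝕜 := ℝ)).open_subset_closure_inter (isOpen_Ioo (a := 0) (b := 1))
    have haI : a ∈ closure (Ioo (0 : ℝ) 1) := by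
      rw [closure_Ioo zero_ne_one]
      exact ⟨ha, by linarith⟩
    exact closure_minimal (this.trans (closure_mono hIoo)) isClosed_closure haI
  refine map_mem_closure₂ (f := fun (t : ℝ) (xy : V × V) => t • xy.1 + (1 - t) • xy.2)
    (by fun_prop) haT (closure_prod_eq (s := s) (t := s) ▸ mk_mem_prod hx hy) ?_
  rintro _ ⟨c, hc0, hc1, rfl⟩ ⟨x', y'⟩ ⟨hx', hy'⟩
  exact hs x' hx' y' hy' c hc0 hc1

def ratCombo (z : ℕ → V) (w : ℕ →₀ ℚ) : V :=
  w.sum fun i q => (q : ℝ) • z i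

def ratStdSimplex : Set (ℕ →₀ ℚ) :=
  {w | (∀ i, 0 ≤ w i) ∧ (w.sum fun _ q => q) = 1}

variable (z : ℕ → V)

theorem ratCombo_single (i : ℕ) (c : ℚ) : ratCombo z (Finsupp.single i c) = (c : ℝ) • z i :=
  Finsupp.sum_single_index (by simp)

theorem ratCombo_add (v w : ℕ →₀ ℚ) : ratCombo z (v + w) = ratCombo z v + ratCombo z w :=
  Finsupp.sum_add_index' (by simp) fun _ _ _ => by push_cast; exact add_smul _ _ _

theorem ratCombo_smul (c : ℚ) (w : ℕ →₀ ℚ) : ratCombo z (c • w) = (c : ℝ) • ratCombo z w := by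
  rw [ratCombo, Finsupp.sum_smul_index' (h := fun i (q : ℚ) => (q : ℝ) • z i) (by simp), ratCombo,
    Finsupp.smul_sum]
  simp only [smul_eq_mul, Rat.cast_mul, mul_smul]

theorem single_mem_ratStdSimplex (i : ℕ) : Finsupp.single i 1 ∈ ratStdSimplex :=
  ⟨fun j => by by_cases h : i = j <;> simp [h], by simp⟩

theorem ratStdSimplex_convexCombo {v w : ℕ →₀ ℚ} (hv : v ∈ ratStdSimplex)
    (hw : w ∈ ratStdSimplex) {c : ℚ} (hc0 : 0 ≤ c) (hc1 : c ≤ 1) :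
    c • v + (1 - c) • w ∈ ratStdSimplex := by
  refine ⟨fun i => ?_, ?_⟩
  · simpa using add_nonneg (mul_nonneg hc0 (hv.1 i)) (mul_nonneg (sub_nonneg.2 hc1) (hw.1 i))
  · rw [Finsupp.sum_add_index' (fun _ => rfl) fun _ _ _ => rfl,
      Finsupp.sum_smul_index' fun _ => rfl, Finsupp.sum_smul_index' fun _ => rfl]
    simp only [smul_eq_mul]
    rw [← Finsupp.mul_sum, ← Finsupp.mul_sum, hv.2, hw.2]
    ring

theorem ratCombo_mem_convexHull {s : Set V} (hz : ∀ i, z i ∈ s) {w : ℕ →₀ ℚ}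
    (hw : w ∈ ratStdSimplex) : ratCombo z w ∈ convexHull ℝ s :=
  (convex_convexHull ℝ s).sum_mem (fun i _ => by exact_mod_cast hw.1 i)
    (by rw [← Rat.cast_one (α := ℝ), ← hw.2, Finsupp.sum, Rat.cast_sum])
    fun i _ => subset_convexHull ℝ s (hz i)

theorem closure_convexHull_subset_closure_ratCombo [TopologicalSpace V]
    [IsTopologicalAddGroup V] [ContinuousSMul ℝ V] {s : Set V} (hs : s ⊆ closure (range z)) :
    closure (convexHull ℝ s) ⊆ closure (ratCombo z '' ratStdSimplex) := by
  rw [← closedConvexHull_eq_closure_convexHull]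
  refine closedConvexHull_min (hs.trans (closure_mono ?_)) ?_ isClosed_closure
  · rintro _ ⟨i, rfl⟩
    exact ⟨_, single_mem_ratStdSimplex i, by simp [ratCombo_single]⟩
  · refine Convex.closure_of_forall_rat ?_
    rintro _ ⟨v, hv, rfl⟩ _ ⟨w, hw, rfl⟩ c hc0 hc1
    exact ⟨_, ratStdSimplex_convexCombo hv hw hc0 hc1, by
      simp only [ratCombo_add, ratCombo_smul, Rat.cast_sub, Rat.cast_one]⟩

end RationalConvexCombinations

section Decomposable

variable {Ω : Type*} {mΩ : MeasurableSpace Ω} {μ : Measure Ω} {E : Type*}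
  [NormedAddCommGroup E] {p : ℝ≥0∞}

theorem isDecomposable_selLp (X : Ω → Set E) : IsDecomposable (SelLp μ p X) := by
  intro f hf g hg B _ h hh
  show ∀ᵐ ω ∂μ, h ω ∈ X ω
  filter_upwards [hh, hf, hg] with ω hω hfω hgω
  by_cases hB : ω ∈ B <;> simp [hω, hB, hfω, hgω]

variable [NormedSpace ℝ E]

noncomputable def MeasureTheory.Lp.indicatorₗ {B : Set Ω} (hB : MeasurableSet B) : Lp E p μ →ₗ[ℝ] Lp E p μ where
  toFun f := ((Lp.memLp f).indicator hB).toLp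
  map_add' f g := by
    rw [← MemLp.toLp_add]
    refine MemLp.toLp_congr _ _ ?_
    filter_upwards [Lp.coeFn_add f g] with ω h
    by_cases hω : ω ∈ B
    · simp only [indicator_of_mem hω, h, Pi.add_apply]
    · simp only [indicator_of_notMem hω, Pi.add_apply, add_zero]
  map_smul' c f := by
    rw [RingHom.id_apply, ← MemLp.toLp_const_smul]
    refine MemLp.toLp_congr _ _ ?_
    filter_upwards [Lp.coeFn_smul c f] with ω h
    by_cases hω : ω ∈ B
    · simp only [indicator_of_mem hω, h, Pi.smul_apply]
    · simp only [indicator_of_notMem hω, Pi.smul_apply, smul_zero]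

theorem MeasureTheory.Lp.coeFn_indicatorₗ {B : Set Ω} (hB : MeasurableSet B) (f : Lp E p μ) :
    ⇑(Lp.indicatorₗ hB f) =ᵐ[μ] B.indicator f :=
  ((Lp.memLp f).indicator hB).coeFn_toLp

theorem MeasureTheory.Lp.coeFn_indicatorₗ_add_indicatorₗ {B : Set Ω} (hB : MeasurableSet B) (f g : Lp E p μ) :
    ⇑(Lp.indicatorₗ hB f + Lp.indicatorₗ hB.compl g) =ᵐ[μ] B.indicator f + Bᶜ.indicator g := by
  filter_upwards [Lp.coeFn_add (Lp.indicatorₗ hB f) (Lp.indicatorₗ hB.compl g),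
    Lp.coeFn_indicatorₗ hB f, Lp.coeFn_indicatorₗ hB.compl g] with ω h h₁ h₂
  rw [h, Pi.add_apply, h₁, h₂, Pi.add_apply]

variable {S : Set (Lp E p μ)}

theorem IsDecomposable.indicatorₗ_add_mem (hS : IsDecomposable S) {B : Set Ω}
    (hB : MeasurableSet B) {f g : Lp E p μ} (hf : f ∈ S) (hg : g ∈ S) :
    Lp.indicatorₗ hB f + Lp.indicatorₗ hB.compl g ∈ S :=
  hS f hf g hg B hB _ (Lp.coeFn_indicatorₗ_add_indicatorₗ hB f g)

theorem IsDecomposable.convexHull (hS : IsDecomposable S) : IsDecomposable (convexHull ℝ S) := by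
  intro f hf g hg B hB h hh
  let L : Lp E p μ × Lp E p μ →ₗ[ℝ] Lp E p μ :=
    (Lp.indicatorₗ hB).comp (LinearMap.fst ℝ _ _) +
      (Lp.indicatorₗ hB.compl).comp (LinearMap.snd ℝ _ _)
  have hL : _root_.convexHull ℝ (S ×ˢ S) ⊆ L ⁻¹' _root_.convexHull ℝ S :=
    convexHull_min (fun x hx => subset_convexHull ℝ S (hS.indicatorₗ_add_mem hB hx.1 hx.2))
      ((convex_convexHull ℝ S).linear_preimage L)
  have hhL : h = L (f, g) := Lp.ext (hh.trans (Lp.coeFn_indicatorₗ_add_indicatorₗ hB f g).symm)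
  exact hhL ▸ hL (convexHull_prod (R := ℝ) S S ▸ mk_mem_prod hf hg)

end Decomposable

section Approximation

variable {Ω : Type*} {mΩ : MeasurableSpace Ω} {μ : Measure Ω} {E : Type*}
  [NormedAddCommGroup E] {p : ℝ≥0∞}

theorem MemLp.exists_eLpNorm_indicator_le_of_antitone [IsFiniteMeasure μ] (hp₁ : 1 ≤ p)
    (hp : p ≠ ∞) {F : Ω → E} (hF : MemLp F p μ) {B : ℕ → Set Ω}
    (hBm : ∀ N, MeasurableSet (B N)) (hB : Antitone B) (hB₀ : μ (⋂ N, B N) = 0) {ε : ℝ}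
    (hε : 0 < ε) : ∃ N, eLpNorm ((B N).indicator F) p μ ≤ ENNReal.ofReal ε := by
  obtain ⟨δ, hδ, hFδ⟩ := hF.eLpNorm_indicator_le hp₁ hp hε
  have hμB := tendsto_measure_iInter_atTop (fun N => (hBm N).nullMeasurableSet) hB
    ⟨0, measure_ne_top μ _⟩
  rw [hB₀] at hμB
  obtain ⟨N, hN⟩ := (hμB.eventually (ge_mem_nhds (ENNReal.ofReal_pos.2 hδ))).exists
  exact ⟨N, hFδ _ (hBm N) hN⟩

theorem eLpNorm_le_of_ae_norm_le_add (hp₁ : 1 ≤ p) {F G : Ω → E}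
    (hG : AEStronglyMeasurable G μ) {c : ℝ≥0} (h : ∀ᵐ ω ∂μ, ‖F ω‖ ≤ c + ‖G ω‖) :
    eLpNorm F p μ ≤ c * μ univ ^ p.toReal⁻¹ + eLpNorm G p μ := calc
  _ ≤ eLpNorm (fun ω => (c : ℝ) + ‖G ω‖) p μ := eLpNorm_mono_ae_real h
  _ ≤ eLpNorm (fun _ => (c : ℝ)) p μ + eLpNorm (fun ω => ‖G ω‖) p μ :=
      eLpNorm_add_le aestronglyMeasurable_const hG.norm hp₁
  _ ≤ c * μ univ ^ p.toReal⁻¹ + eLpNorm G p μ := by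
      rw [eLpNorm_norm]
      gcongr
      simpa [ENNReal.smul_def] using
        eLpNorm_le_of_ae_nnnorm_bound (f := fun _ : Ω => (c : ℝ)) (ae_of_all _ fun _ => by simp)

variable [NormedSpace ℝ E] {S : Set (Lp E p μ)}

theorem IsDecomposable.exists_ae_dist_lt_or_eq (hS : IsDecomposable S) {D : ℕ → Lp E p μ}
    (hD : ∀ n, D n ∈ S) {g : Lp E p μ} (hg : g ∈ S) (f : Lp E p μ) (ε : ℝ) (N : ℕ) :
    ∃ h ∈ S, ∀ᵐ ω ∂μ,
      dist (f ω) (h ω) < ε ∨ (ω ∈ ⋂ n < N, {ω | ε ≤ dist (f ω) (D n ω)} ∧ h ω = g ω) := by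
  induction N with
  | zero => exact ⟨g, hg, ae_of_all _ fun ω => Or.inr ⟨by simp, rfl⟩⟩
  | succ N ih =>
    obtain ⟨h, hhS, hh⟩ := ih
    let A := {ω | ε ≤ dist (f ω) (h ω) ∧ dist (f ω) (D N ω) < ε}
    have hA : MeasurableSet A :=
      (measurableSet_le measurable_const
        ((Lp.stronglyMeasurable f).dist (Lp.stronglyMeasurable h)).measurable).inter
      (measurableSet_lt ((Lp.stronglyMeasurable f).dist (Lp.stronglyMeasurable _)).measurable
        measurable_const)
    refine ⟨_, hS.indicatorₗ_add_mem hA (hD N) hhS, ?_⟩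
    filter_upwards [hh, Lp.coeFn_indicatorₗ_add_indicatorₗ hA (D N) h] with ω hω hglue
    rw [hglue, Pi.add_apply]
    by_cases hωA : ω ∈ A
    · rw [indicator_of_mem hωA, indicator_of_notMem (notMem_compl_iff.2 hωA), add_zero]
      exact Or.inl hωA.2
    rw [indicator_of_notMem hωA, indicator_of_mem (mem_compl hωA), zero_add]
    refine or_iff_not_imp_left.2 fun hfh => ?_
    obtain ⟨hfar, hhg⟩ := hω.resolve_left hfh
    refine ⟨mem_iInter₂.2 fun n hn => ?_, hhg⟩
    rcases Nat.lt_succ_iff_lt_or_eq.1 hn with hn | rfl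
    · exact mem_iInter₂.1 hfar n hn
    · exact not_lt.1 fun hlt => hωA ⟨not_lt.1 hfh, hlt⟩

theorem IsDecomposable.mem_closure_of_ae_mem_closure [IsFiniteMeasure μ] [Fact (1 ≤ p)]
    (hp : p ≠ ∞) (hS : IsDecomposable S) {D : ℕ → Lp E p μ} (hD : ∀ n, D n ∈ S)
    {f : Lp E p μ} (hf : ∀ᵐ ω ∂μ, f ω ∈ closure (range fun n => D n ω)) : f ∈ closure S := by
  refine Metric.mem_closure_iff.2 fun ε hε => ?_
  have hμ : μ univ ^ p.toReal⁻¹ ≠ ∞ :=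
    ENNReal.rpow_ne_top_of_nonneg (by positivity) (measure_ne_top μ univ)
  obtain ⟨c, hc, hcε⟩ :=
    ENNReal.exists_nnreal_pos_mul_lt hμ (ENNReal.ofReal_pos.2 (half_pos hε)).ne'
  let B : ℕ → Set Ω := fun N => ⋂ n < N, {ω | (c : ℝ) ≤ dist (f ω) (D n ω)}
  have hBm : ∀ N, MeasurableSet (B N) := fun N =>
    MeasurableSet.iInter fun n => MeasurableSet.iInter fun _ => measurableSet_le measurable_const
      ((Lp.stronglyMeasurable f).dist (Lp.stronglyMeasurable _)).measurable
  have hB : Antitone B := fun N M hNM =>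
    iInter₂_mono' fun n hn => ⟨n, hn.trans_le hNM, subset_rfl⟩
  have hB₀ : μ (⋂ N, B N) = 0 := by
    refine measure_mono_null ?_ (ae_iff.1 hf)
    intro ω hω hfω
    obtain ⟨n, hn⟩ := Metric.mem_closure_range_iff.1 hfω c hc
    exact (mem_iInter₂.1 (mem_iInter.1 hω (n + 1)) n n.lt_succ_self).not_gt hn
  obtain ⟨N, hN⟩ := MemLp.exists_eLpNorm_indicator_le_of_antitone Fact.out hp
    ((Lp.memLp f).sub (Lp.memLp (D 0))) hBm hB hB₀ (half_pos hε)
  obtain ⟨h, hhS, hh⟩ := hS.exists_ae_dist_lt_or_eq hD (hD 0) f c N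
  refine ⟨h, hhS, ?_⟩
  have hpt : ∀ᵐ ω ∂μ, ‖(⇑f - ⇑h) ω‖ ≤ c + ‖(B N).indicator (⇑f - ⇑(D 0)) ω‖ := by
    filter_upwards [hh] with ω hω
    rcases hω with hlt | ⟨hωB, hhg⟩
    · rw [Pi.sub_apply, ← dist_eq_norm]
      linarith [norm_nonneg ((B N).indicator (⇑f - ⇑(D 0)) ω)]
    · rw [indicator_of_mem hωB, Pi.sub_apply, Pi.sub_apply, hhg]
      linarith [c.coe_nonneg]
  have hfh : eLpNorm (⇑f - ⇑h) p μ < ENNReal.ofReal ε := calc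
    _ ≤ c * μ univ ^ p.toReal⁻¹ + eLpNorm ((B N).indicator (⇑f - ⇑(D 0))) p μ :=
        eLpNorm_le_of_ae_norm_le_add Fact.out
          (((Lp.memLp f).sub (Lp.memLp (D 0))).indicator (hBm N)).1 hpt
    _ < ENNReal.ofReal (ε / 2) + ENNReal.ofReal (ε / 2) :=
        ENNReal.add_lt_add_of_lt_of_le (hN.trans_lt ENNReal.ofReal_lt_top).ne hcε hN
    _ = ENNReal.ofReal ε := by rw [← ENNReal.ofReal_add (by positivity) (by positivity), add_halves]
  rw [Lp.dist_def]
  exact ENNReal.toReal_lt_of_lt_ofReal hfh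

end Approximation

section SelLp

variable {Ω : Type*} {mΩ : MeasurableSpace Ω} {μ : Measure Ω} {E : Type*}
  [NormedAddCommGroup E] {p : ℝ≥0∞}

theorem selLp_mono {X Y : Ω → Set E} (h : ∀ᵐ ω ∂μ, X ω ⊆ Y ω) : SelLp μ p X ⊆ SelLp μ p Y :=
  fun f hf => by filter_upwards [hf, h] with ω hfω hω using hω hfω

theorem isClosed_selLp [Fact (1 ≤ p)] {X : Ω → Set E} (hX : ∀ᵐ ω ∂μ, IsClosed (X ω)) :
    IsClosed (SelLp μ p X) := by
  refine IsSeqClosed.isClosed fun g f hg hgf => ?_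
  obtain ⟨ns, -, hns⟩ := (tendstoInMeasure_of_tendsto_Lp hgf).exists_seq_tendsto_ae
  filter_upwards [ae_all_iff.2 fun i => hg (ns i), hns, hX] with ω hgω hω hXω
  exact hXω.mem_of_tendsto hω (Eventually.of_forall hgω)

variable [NormedSpace ℝ E]

theorem MeasureTheory.Lp.coeFn_ratCombo (Z : ℕ → Lp E p μ) (w : ℕ →₀ ℚ) :
    ⇑(ratCombo Z w) =ᵐ[μ] fun ω => ratCombo (fun n => Z n ω) w := by
  induction w using Finsupp.induction with
  | zero =>
    simp only [ratCombo, Finsupp.sum_zero_index]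
    exact Lp.coeFn_zero E p μ
  | single_add i c w _ _ ih =>
    simp only [ratCombo_add, ratCombo_single]
    filter_upwards [Lp.coeFn_add ((c : ℝ) • Z i) (ratCombo Z w), Lp.coeFn_smul (c : ℝ) (Z i),
      ih] with ω h₁ h₂ h₃
    rw [h₁, Pi.add_apply, h₂, h₃, Pi.smul_apply]

theorem exists_seq_convexHull_dense {S : Set (Lp E p μ)} {Z : ℕ → Lp E p μ} (hZ : ∀ n, Z n ∈ S)
    {X : Ω → Set E} (hXZ : ∀ᵐ ω ∂μ, X ω ⊆ closure (range fun n => Z n ω)) :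
    ∃ D : ℕ → Lp E p μ, (∀ n, D n ∈ convexHull ℝ S) ∧
      ∀ᵐ ω ∂μ, closure (convexHull ℝ (X ω)) ⊆ closure (range fun n => D n ω) := by
  obtain ⟨v, hv⟩ := ratStdSimplex.to_countable.exists_eq_range ⟨_, single_mem_ratStdSimplex 0⟩
  refine ⟨fun n => ratCombo Z (v n),
    fun n => ratCombo_mem_convexHull Z hZ (hv ▸ mem_range_self n), ?_⟩
  filter_upwards [hXZ, ae_all_iff.2 fun n => Lp.coeFn_ratCombo Z (v n)] with ω hX hD
  have hrange : ratCombo (fun n => Z n ω) '' ratStdSimplex = range fun n => ratCombo Z (v n) ω := by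
    rw [hv, ← range_comp]
    exact congrArg range (funext fun n => (hD n).symm)
  exact hrange ▸ closure_convexHull_subset_closure_ratCombo _ hX

theorem convex_selLp {X : Ω → Set E} (hX : ∀ᵐ ω ∂μ, Convex ℝ (X ω)) :
    Convex ℝ (SelLp μ p X) := by
  intro f hf g hg a b ha hb hab
  filter_upwards [Lp.coeFn_add (a • f) (b • g), Lp.coeFn_smul a f, Lp.coeFn_smul b g,
    hf, hg, hX] with ω h₁ h₂ h₃ hfω hgω hXω
  rw [h₁, Pi.add_apply, h₂, h₃]
  exact hXω hfω hgω ha hb hab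

end SelLp

theorem selections_closedConvexHull_general
    {Ω : Type*} {mΩ : MeasurableSpace Ω} {μ : Measure Ω} [IsProbabilityMeasure μ]
    {E : Type*} [NormedAddCommGroup E] [NormedSpace ℝ E]
    [CompleteSpace E] [SecondCountableTopology E]
    {p : ℝ≥0∞} [Fact (1 ≤ p)] (hp' : p ≠ ⊤)
    (X : Ω → Set E) (hXcl : ∀ᵐ ω ∂μ, IsClosed (X ω)) (hXm : EffrosMeasurable mΩ X)
    (hne : (SelLp μ p X).Nonempty) :
    SelLp μ p (fun ω => closure (convexHull ℝ (X ω))) =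
      closure (convexHull ℝ (SelLp μ p X)) ∧
    ((∀ᵐ ω ∂μ, Convex ℝ (X ω)) ↔ Convex ℝ (SelLp μ p X)) := by
  obtain ⟨Z, hZX, hXZ⟩ := exists_seq_selLp_dense hXcl hXm hne
  obtain ⟨D, hDX, hXD⟩ := exists_seq_convexHull_dense hZX hXZ
  refine ⟨subset_antisymm (fun f hf => ?_) ?_, ⟨convex_selLp, fun hconv => ?_⟩⟩
  · refine (isDecomposable_selLp X).convexHull.mem_closure_of_ae_mem_closure hp' hDX ?_
    filter_upwards [hf, hXD] with ω hfω hω using hω hfω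
  · refine closure_minimal (convexHull_min ?_ ?_)
      (isClosed_selLp (ae_of_all _ fun ω => isClosed_closure))
    · exact selLp_mono (ae_of_all _ fun ω => subset_convexHull ℝ (X ω) |>.trans subset_closure)
    · exact convex_selLp (ae_of_all _ fun ω => (convex_convexHull ℝ (X ω)).closure)
  · have hDX' : ∀ᵐ ω ∂μ, ∀ n, D n ω ∈ X ω :=
      ae_all_iff.2 fun n => (hconv.convexHull_eq ▸ hDX n : D n ∈ SelLp μ p X)
    filter_upwards [hDX', hXD, hXcl] with ω hDω hω hXω
    have hXeq : closure (convexHull ℝ (X ω)) = X ω :=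
      (hω.trans (closure_minimal (range_subset_iff.2 hDω) hXω)).antisymm
        ((subset_convexHull ℝ _).trans subset_closure)
    exact hXeq ▸ (convex_convexHull ℝ (X ω)).closure

/-- For a closed Effros-measurable random set `X` with `L^p(X) ≠ ∅`:
`L^p(c̄onv X) = c̄onv L^p(X)`, and `X` is a.s. convex iff `L^p(X)` is convex. -/
theorem selections_closedConvexHull
    {Ω : Type*} {mΩ : MeasurableSpace Ω} {μ : Measure Ω} [IsProbabilityMeasure μ]
    (hμ : μ.IsComplete) {E : Type*} [NormedAddCommGroup E] [NormedSpace ℝ E]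
    [CompleteSpace E] [SecondCountableTopology E]
    {p : ℝ≥0∞} [Fact (1 ≤ p)] (hp' : p ≠ ⊤)
    (X : Ω → Set E) (hXcl : ∀ᵐ ω ∂μ, IsClosed (X ω)) (hXm : EffrosMeasurable mΩ X)
    (hne : (SelLp μ p X).Nonempty) :
    SelLp μ p (fun ω => closure (convexHull ℝ (X ω))) =
      closure (convexHull ℝ (SelLp μ p X)) ∧
    ((∀ᵐ ω ∂μ, Convex ℝ (X ω)) ↔ Convex ℝ (SelLp μ p X)) :=
  selections_closedConvexHull_general hp' X hXcl hXm hne
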